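/- Let T ∈ B(H) be nonzero with block form T = [[S, R],[0, Q]] on H = G ⊕ G^⊥, where (1/‖T‖)S is an isometry on G and Q² = 0. If |T| ≤ |Re T|, then T is self-adjoint. -/

import Mathlib

open ContinuousLinearMap

/-- The modulus `|T| = (T*T)^{1/2}` of an operator. -/
noncomputable def absOp {H : Type*} [NormedAddCommGroup H] [InnerProductSpace ℂ H]
    [CompleteSpace H] (T : H →L[ℂ] H) : H →L[ℂ] H :=
  CFC.sqrt (adjoint T * T)

/-- The real part `Re T = (T + T*)/2` of an operator. -/
noncomputable def reOp {H : Type*} [NormedAddCommGroup H] [InnerProductSpace ℂ H]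
    [CompleteSpace H] (T : H →L[ℂ] H) : H →L[ℂ] H :=
  (2 : ℂ)⁻¹ • (T + adjoint T)

/-- `|Re T| = ((Re T)^2)^{1/2}`. -/
noncomputable def absRe {H : Type*} [NormedAddCommGroup H] [InnerProductSpace ℂ H]
    [CompleteSpace H] (T : H →L[ℂ] H) : H →L[ℂ] H :=
  CFC.sqrt (reOp T ^ 2)

/-! Write `A = |T|`. For a positive operator, Cauchy–Schwarz for the form `⟪A ·, ·⟫` gives
`‖A y‖² ≤ c · re ⟪A y, y⟫` whenever `‖A (A y)‖ ≤ c ‖A y‖`, and `|T| ≤ |Re T|` bounds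
`re ⟪A y, y⟫` by `‖Re T y‖ ‖y‖`. On `G`, where `T` attains its norm, this forces
`‖Re T x‖ ≥ ‖T‖ ‖x‖`, so `T x = T* x` by the parallelogram law. Hence `G` reduces `T` and
`T = Q` on `Gᗮ`. There `T (T y) = 0` makes `T y ⟂ T* y`, so `‖Re T y‖² ≤ ‖Q‖² ‖y‖² / 2`, and
the same estimate gives `‖Q y‖⁴ ≤ ‖Q‖⁴ ‖y‖⁴ / 2`; hence `Q = 0`. -/

open RCLike
open scoped InnerProductSpace

lemma eq_of_norm_le_of_two_mul_le_norm_add {𝕜 E : Type*} [RCLike 𝕜] [NormedAddCommGroup E]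
    [InnerProductSpace 𝕜 E] {u v : E} {r : ℝ} (hu : ‖u‖ ≤ r) (hv : ‖v‖ ≤ r)
    (huv : 2 * r ≤ ‖u + v‖) : u = v := by
  have hpar := parallelogram_law_with_norm 𝕜 u v
  have hr : 0 ≤ r := (norm_nonneg u).trans hu
  have : ‖u - v‖ ^ 2 ≤ 0 := by nlinarith [norm_nonneg u, norm_nonneg v]
  exact sub_eq_zero.mp (norm_eq_zero.mp (by nlinarith [norm_nonneg (u - v)]))

section
variable {H : Type*} [NormedAddCommGroup H] [InnerProductSpace ℂ H] [CompleteSpace H]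

lemma adjoint_sqrt_comp_sqrt {A : H →L[ℂ] H} (hA : 0 ≤ A) :
    adjoint (CFC.sqrt A) ∘L CFC.sqrt A = A := by
  rw [(IsSelfAdjoint.of_nonneg (CFC.sqrt_nonneg A)).adjoint_eq]
  exact CFC.sqrt_mul_sqrt_self A hA

lemma inner_apply_eq_inner_sqrt_apply {A : H →L[ℂ] H} (hA : 0 ≤ A) (u v : H) :
    ⟪A u, v⟫_ℂ = ⟪CFC.sqrt A u, CFC.sqrt A v⟫_ℂ := by
  rw [← adjoint_inner_left, ← comp_apply, adjoint_sqrt_comp_sqrt hA]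

lemma re_inner_sq_le_of_nonneg {A : H →L[ℂ] H} (hA : 0 ≤ A) (u v : H) :
    re ⟪A u, v⟫_ℂ ^ 2 ≤ re ⟪A u, u⟫_ℂ * re ⟪A v, v⟫_ℂ := by
  simp only [inner_apply_eq_inner_sqrt_apply hA, inner_self_eq_norm_sq (𝕜 := ℂ)]
  rw [← mul_pow, ← sq_abs]
  exact pow_le_pow_left₀ (abs_nonneg _)
    ((abs_re_le_norm _).trans (norm_inner_le_norm _ _)) 2

lemma norm_apply_sq_le_of_nonneg {A : H →L[ℂ] H} (hA : 0 ≤ A) {c : ℝ} {y : H}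
    (h : ‖A (A y)‖ ≤ c * ‖A y‖) : ‖A y‖ ^ 2 ≤ c * re ⟪A y, y⟫_ℂ := by
  have hsq : ‖A y‖ ^ 2 = re ⟪A (A y), y⟫_ℂ := by
    rw [apply_norm_sq_eq_inner_adjoint_left, (IsSelfAdjoint.of_nonneg hA).adjoint_eq]; rfl
  have hcs := re_inner_sq_le_of_nonneg hA (A y) y
  have hAAy : re ⟪A (A y), A y⟫_ℂ ≤ c * ‖A y‖ ^ 2 :=
    (re_inner_le_norm _ _).trans (by nlinarith [norm_nonneg (A y)])
  rcases (norm_nonneg (A y)).eq_or_lt with hy | hy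
  · simp [norm_eq_zero.mp hy.symm]
  · rw [← hsq] at hcs
    have hnn : 0 ≤ re ⟪A y, y⟫_ℂ := ((nonneg_iff_isPositive A).mp hA).re_inner_nonneg_left y
    have : ‖A y‖ ^ 2 * ‖A y‖ ^ 2 ≤ ‖A y‖ ^ 2 * (c * re ⟪A y, y⟫_ℂ) := by
      nlinarith [mul_le_mul_of_nonneg_right hAAy hnn]
    exact le_of_mul_le_mul_left this (by positivity)

lemma norm_sqrt_adjoint_mul_self_apply (S : H →L[ℂ] H) (z : H) :
    ‖CFC.sqrt (adjoint S * S) z‖ = ‖S z‖ := by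
  have hS : 0 ≤ adjoint S * S := by simpa only [star_eq_adjoint] using star_mul_self_nonneg S
  rw [← pow_left_inj₀ (norm_nonneg _) (norm_nonneg _) two_ne_zero,
    apply_norm_sq_eq_inner_adjoint_left, adjoint_sqrt_comp_sqrt hS,
    apply_norm_sq_eq_inner_adjoint_left]
  rfl

lemma isSelfAdjoint_reOp (T : H →L[ℂ] H) : IsSelfAdjoint (reOp T) := by
  rw [IsSelfAdjoint, reOp, star_smul, star_add, star_eq_adjoint, star_eq_adjoint,
    adjoint_adjoint, add_comm]
  simp

lemma two_smul_reOp_apply (T : H →L[ℂ] H) (z : H) :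
    (2 : ℂ) • reOp T z = T z + adjoint T z := by
  simp [reOp, smul_smul]

lemma absOp_nonneg (T : H →L[ℂ] H) : 0 ≤ absOp T := CFC.sqrt_nonneg _

lemma absOp_apply_absOp_apply (T : H →L[ℂ] H) (z : H) :
    absOp T (absOp T z) = adjoint T (T z) :=
  DFunLike.congr_fun
    (CFC.sqrt_mul_sqrt_self _ (by simpa only [star_eq_adjoint] using star_mul_self_nonneg T)) z

lemma norm_absOp_apply (T : H →L[ℂ] H) (z : H) : ‖absOp T z‖ = ‖T z‖ :=
  norm_sqrt_adjoint_mul_self_apply T z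

lemma norm_absRe_apply (T : H →L[ℂ] H) (z : H) : ‖absRe T z‖ = ‖reOp T z‖ := by
  have h : reOp T ^ 2 = adjoint (reOp T) * reOp T := by
    rw [(isSelfAdjoint_reOp T).adjoint_eq, sq]
  rw [absRe, h]
  exact norm_sqrt_adjoint_mul_self_apply _ z

lemma re_inner_absOp_apply_le {T : H →L[ℂ] H} (h : absOp T ≤ absRe T) (z : H) :
    re ⟪absOp T z, z⟫_ℂ ≤ ‖reOp T z‖ * ‖z‖ := by
  have hpos := ((le_def _ _).mp h).re_inner_nonneg_left z
  rw [sub_apply, inner_sub_left, map_sub, sub_nonneg] at hpos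
  calc re ⟪absOp T z, z⟫_ℂ ≤ re ⟪absRe T z, z⟫_ℂ := hpos
    _ ≤ ‖absRe T z‖ * ‖z‖ := re_inner_le_norm _ _
    _ = ‖reOp T z‖ * ‖z‖ := by rw [norm_absRe_apply]

lemma norm_adjoint_apply_le {T : H →L[ℂ] H} {c : ℝ} (hc : 0 ≤ c) {y : H}
    (h : ‖T (adjoint T y)‖ ≤ c * ‖adjoint T y‖) : ‖adjoint T y‖ ≤ c * ‖y‖ := by
  have hsq : ‖adjoint T y‖ ^ 2 ≤ ‖adjoint T y‖ * (c * ‖y‖) := by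
    rw [← inner_self_eq_norm_sq (𝕜 := ℂ), adjoint_inner_left]
    calc re ⟪y, T (adjoint T y)⟫_ℂ ≤ ‖y‖ * ‖T (adjoint T y)‖ := re_inner_le_norm _ _
      _ ≤ ‖adjoint T y‖ * (c * ‖y‖) := by nlinarith [norm_nonneg y]
  rcases (norm_nonneg (adjoint T y)).eq_or_lt with hy | hy
  · rw [← hy]; positivity
  · nlinarith

lemma adjoint_apply_eq_of_norm_apply_eq_opNorm {T : H →L[ℂ] H} (h : absOp T ≤ absRe T) {x : H}
    (hx : ‖T x‖ = ‖T‖ * ‖x‖) : adjoint T x = T x := by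
  set r := ‖T‖ * ‖x‖
  have hA : ‖absOp T x‖ = r := (norm_absOp_apply T x).trans hx
  have hAA : ‖absOp T (absOp T x)‖ ≤ ‖T‖ * ‖absOp T x‖ :=
    (norm_absOp_apply T _).trans_le (T.le_opNorm _)
  have h1 := norm_apply_sq_le_of_nonneg (absOp_nonneg T) hAA
  have h2 := re_inner_absOp_apply_le h x
  have hr : r ≤ ‖reOp T x‖ := by
    rw [hA] at h1
    have : r * r ≤ r * ‖reOp T x‖ := by
      nlinarith [mul_le_mul_of_nonneg_left h2 (norm_nonneg T)]
    rcases (by positivity : 0 ≤ r).eq_or_lt with hr0 | hr0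
    · rw [← hr0]; positivity
    · exact le_of_mul_le_mul_left this hr0
  refine (eq_of_norm_le_of_two_mul_le_norm_add (𝕜 := ℂ) (T.le_opNorm x) ?_ ?_).symm
  · rw [← adjoint.norm_map T]; exact (adjoint T).le_opNorm x
  · rw [← two_smul_reOp_apply, norm_smul, Complex.norm_two]; linarith

lemma two_mul_norm_apply_pow_four_le {T : H →L[ℂ] H} (h : absOp T ≤ absRe T) {c : ℝ}
    (hc : 0 ≤ c) {y : H} (hTy : ‖T y‖ ≤ c * ‖y‖) (hT'y : ‖adjoint T y‖ ≤ c * ‖y‖)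
    (hT'Ty : ‖adjoint T (T y)‖ ≤ c * ‖T y‖) (hTTy : T (T y) = 0) :
    2 * ‖T y‖ ^ 4 ≤ (c * ‖y‖) ^ 4 := by
  have hAA : ‖absOp T (absOp T y)‖ ≤ c * ‖absOp T y‖ := by
    rwa [absOp_apply_absOp_apply, norm_absOp_apply]
  have h1 : ‖T y‖ ^ 2 ≤ c * (‖reOp T y‖ * ‖y‖) := by
    rw [← norm_absOp_apply]
    exact (norm_apply_sq_le_of_nonneg (absOp_nonneg T) hAA).trans
      (mul_le_mul_of_nonneg_left (re_inner_absOp_apply_le h y) hc)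
  have horth : re ⟪T y, adjoint T y⟫_ℂ = 0 := by
    rw [adjoint_inner_right, hTTy, inner_zero_left, map_zero]
  have h2 : 4 * ‖reOp T y‖ ^ 2 = ‖T y‖ ^ 2 + ‖adjoint T y‖ ^ 2 := by
    have := congrArg (‖·‖ ^ 2) (two_smul_reOp_apply T y)
    simp only [norm_smul, Complex.norm_two, norm_add_sq (𝕜 := ℂ), horth] at this
    linarith
  have h3 : (‖T y‖ ^ 2) ^ 2 ≤ (c * (‖reOp T y‖ * ‖y‖)) ^ 2 :=
    pow_le_pow_left₀ (sq_nonneg _) h1 2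
  nlinarith [pow_le_pow_left₀ (norm_nonneg _) hTy 2, pow_le_pow_left₀ (norm_nonneg _) hT'y 2,
    sq_nonneg (c * ‖y‖)]

end

lemma ContinuousLinearMap.eq_zero_of_two_mul_norm_apply_pow_four_le {𝕜 E F : Type*}
    [RCLike 𝕜] [NormedAddCommGroup E] [NormedSpace 𝕜 E] [NormedAddCommGroup F]
    [NormedSpace 𝕜 F] (f : E →L[𝕜] F) (h : ∀ y, 2 * ‖f y‖ ^ 4 ≤ (‖f‖ * ‖y‖) ^ 4) : f = 0 := by
  -- `9/10` is any constant in `((1/2)^(1/4), 1)`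
  have hf : ‖f‖ ≤ 9 / 10 * ‖f‖ := by
    refine opNorm_le_bound _ (by positivity) fun y => ?_
    have hy : ‖f y‖ ^ 4 ≤ (9 / 10 * ‖f‖ * ‖y‖) ^ 4 := by
      nlinarith [h y, pow_nonneg (mul_nonneg (norm_nonneg f) (norm_nonneg y)) 4]
    exact (pow_le_pow_iff_left₀ (norm_nonneg _) (by positivity) four_ne_zero).mp hy
  exact norm_le_zero_iff.mp (by linarith [norm_nonneg f])

theorem stmt13_general {H : Type*} [NormedAddCommGroup H] [InnerProductSpace ℂ H] [CompleteSpace H]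
    (T : H →L[ℂ] H) (G : Submodule ℂ H) (hGc : IsClosed (G : Set H))
    (hGinv : ∀ x ∈ G, T x ∈ G)
    (hS : ∀ x ∈ G, ‖T x‖ = ‖T‖ * ‖x‖)
    (Q : (Gᗮ : Submodule ℂ H) →L[ℂ] (Gᗮ : Submodule ℂ H))
    (hQ : ∀ x : (Gᗮ : Submodule ℂ H), T x - Q x ∈ G)
    (hQ2 : Q ^ 2 = 0)
    (h : absOp T ≤ absRe T) :
    adjoint T = T := by
  have : CompleteSpace G := hGc.completeSpace_coe
  have hTG : ∀ x ∈ G, adjoint T x = T x := fun x hx =>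
    adjoint_apply_eq_of_norm_apply_eq_opNorm h (hS x hx)
  have hT'G : ∀ x ∈ G, adjoint T x ∈ G := fun x hx => (hTG x hx).symm ▸ hGinv x hx
  have hTperp : ∀ y ∈ Gᗮ, T y ∈ Gᗮ := orthogonal_mem_invtSubmodule hT'G
  have hT'perp : ∀ y ∈ Gᗮ, adjoint T y ∈ Gᗮ :=
    orthogonal_mem_invtSubmodule (T := adjoint T) fun x hx =>
      (adjoint_adjoint T).symm ▸ hGinv x hx
  have hTQ : ∀ y : Gᗮ, T y = Q y := fun y => sub_eq_zero.mp <|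
    Submodule.disjoint_def.mp G.orthogonal_disjoint _ (hQ y) (sub_mem (hTperp y y.2) (Q y).2)
  have hTle : ∀ y ∈ Gᗮ, ‖T y‖ ≤ ‖Q‖ * ‖y‖ := fun y hy => by
    rw [hTQ ⟨y, hy⟩]; exact Q.le_opNorm ⟨y, hy⟩
  have hT'le : ∀ y ∈ Gᗮ, ‖adjoint T y‖ ≤ ‖Q‖ * ‖y‖ := fun y hy =>
    norm_adjoint_apply_le (norm_nonneg Q) (hTle _ (hT'perp y hy))
  have hQ0 : Q = 0 := Q.eq_zero_of_two_mul_norm_apply_pow_four_le fun y => by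
    have hTTy : T (T y) = 0 := by
      have hQQ : Q (Q y) = 0 := by simpa [sq] using DFunLike.congr_fun hQ2 y
      rw [hTQ y, hTQ (Q y), hQQ, Submodule.coe_zero]
    have := two_mul_norm_apply_pow_four_le h (norm_nonneg Q) (hTle y y.2)
      (hT'le y y.2) (hT'le _ (hTperp y y.2)) hTTy
    rwa [hTQ y] at this
  ext z
  obtain ⟨x, hx, y, hy, rfl⟩ := G.exists_add_mem_mem_orthogonal z
  have hTy : T y = 0 := by simpa [hQ0] using hTQ ⟨y, hy⟩
  have hT'y : adjoint T y = 0 :=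
    norm_le_zero_iff.mp (by simpa [hQ0, opNorm_zero] using hT'le y hy)
  rw [map_add, map_add, hTG x hx, hTy, hT'y]

/-- A nonzero operator with block form `[[S, R],[0, Q]]`, `S/‖T‖` an isometry on `G`,
`Q² = 0`, satisfying `|T| ≤ |Re T|`, is self-adjoint. -/
theorem stmt13 {H : Type*} [NormedAddCommGroup H] [InnerProductSpace ℂ H] [CompleteSpace H]
    (T : H →L[ℂ] H) (hT0 : T ≠ 0) (G : Submodule ℂ H) (hGc : IsClosed (G : Set H))
    (hGinv : ∀ x ∈ G, T x ∈ G)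
    (hS : ∀ x ∈ G, ‖T x‖ = ‖T‖ * ‖x‖)
    (Q : (Gᗮ : Submodule ℂ H) →L[ℂ] (Gᗮ : Submodule ℂ H))
    (hQ : ∀ x : (Gᗮ : Submodule ℂ H), T x - Q x ∈ G)
    (hQ2 : Q ^ 2 = 0)
    (h : absOp T ≤ absRe T) :
    adjoint T = T :=
  stmt13_general T G hGc hGinv hS Q hQ hQ2 h
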